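/- arXiv:2411.12522 — 3 statements merged into one kernel-verified Lean document; each statement's English description precedes it below -/
import Mathlib

section
/- Let Z be a finite set and let J be a subset of {(j,k) ∈ Z × Z : j ≠ k}. Suppose every cyclic sequence i_0 ≠ i_1 ≠ ... ≠ i_n with i_0 = i_n of states in Z contains at least one consecutive pair (i_{l-1}, i_l) belonging to J. Then for any finite walk i_0 ≠ i_1 ≠ ... ≠ i_n in Z (consecutive states distinct), the number of indices l with (i_{l-1}, i_l) ∉ J is at most |Z| - 1 + (|Z| - 1) * (number of indices l with (i_{l-1}, i_l) ∈ J); equivalently n ≤ |Z| - 1 + |Z| * #{l : (i_{l-1}, i_l) ∈ J}. -/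
/-!
Between two consecutive `J`-steps the walk visits pairwise distinct states: a repeated state
would close a cycle avoiding `J`. So every `J`-free stretch of the walk has at most `|Z| - 1`
steps, and the `k` steps in `J` cut the walk into at most `k + 1` such stretches.
-/

open Finset

def HitsEveryCycle {Z : Type*} (J : Set (Z × Z)) : Prop :=
  ∀ (n : ℕ) (c : ℕ → Z), 0 < n → (∀ l < n, c l ≠ c (l + 1)) →
    c 0 = c n → ∃ l < n, (c l, c (l + 1)) ∈ J

section Walk

variable {Z : Type*} {J : Set (Z × Z)} {i : ℕ → Z} {a b : ℕ}

theorem HitsEveryCycle.exists_step_mem (hcyc : HitsEveryCycle J) {p q : ℕ} (hpq : p < q)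
    (hwalk : ∀ l, p ≤ l → l < q → i l ≠ i (l + 1)) (hpq_eq : i p = i q) :
    ∃ l, p ≤ l ∧ l < q ∧ (i l, i (l + 1)) ∈ J := by
  obtain ⟨l, hl, hmem⟩ := hcyc (q - p) (fun l => i (p + l)) (by omega)
    (fun l hl => hwalk (p + l) (by omega) (by omega))
    (by simpa [Nat.add_sub_cancel' hpq.le] using hpq_eq)
  exact ⟨p + l, by omega, by omega, hmem⟩

theorem HitsEveryCycle.injOn_Icc (hcyc : HitsEveryCycle J)
    (hwalk : ∀ l, a ≤ l → l < b → i l ≠ i (l + 1))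
    (hfree : ∀ l, a ≤ l → l < b → (i l, i (l + 1)) ∉ J) :
    Set.InjOn i (Set.Icc a b) := by
  have key : ∀ p q, a ≤ p → p < q → q ≤ b → i p ≠ i q := fun p q hap hpq hqb heq => by
    obtain ⟨l, hpl, hlq, hmem⟩ :=
      hcyc.exists_step_mem hpq (fun l hpl hlq => hwalk l (by omega) (by omega)) heq
    exact hfree l (by omega) (by omega) hmem
  intro p ⟨hap, hpb⟩ q ⟨haq, hqb⟩ heq
  by_contra hne
  rcases Nat.lt_or_gt_of_ne hne with hpq | hqp
  · exact key p q hap hpq hqb heq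
  · exact key q p haq hqp hpb heq.symm

theorem HitsEveryCycle.sub_lt_card [Fintype Z] (hcyc : HitsEveryCycle J) (hab : a ≤ b)
    (hwalk : ∀ l, a ≤ l → l < b → i l ≠ i (l + 1))
    (hfree : ∀ l, a ≤ l → l < b → (i l, i (l + 1)) ∉ J) :
    b - a < Fintype.card Z := by
  have hle := card_le_card_of_injOn i (s := Icc a b) (t := univ) (fun _ _ => mem_univ _)
    (by simpa using hcyc.injOn_Icc hwalk hfree)
  rw [Nat.card_Icc, card_univ] at hle
  omega

end Walk

theorem le_pred_add_mul_card_filter_range {P : ℕ → Prop} [DecidablePred P] {m : ℕ} :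
    ∀ n : ℕ, (∀ a b, a ≤ b → b ≤ n → (∀ l, a ≤ l → l < b → ¬ P l) → b - a < m) →
      n ≤ m - 1 + m * #((range n).filter P) := by
  intro n
  induction n using Nat.strong_induction_on with
  | _ n ih =>
    intro hgap
    by_cases hP : ((range n).filter P).Nonempty
    · set S := (range n).filter P
      set l₀ := S.max' hP
      have hl₀S : l₀ ∈ S := S.max'_mem hP
      have hl₀n : l₀ < n := mem_range.mp (mem_filter.mp hl₀S).1
      have htail : n - (l₀ + 1) < m := hgap (l₀ + 1) n (by omega) le_rfl fun l hl hln hPl => by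
        have := S.le_max' l (mem_filter.mpr ⟨mem_range.mpr hln, hPl⟩)
        omega
      have hhead := ih l₀ hl₀n fun a b hab hb hfree => hgap a b hab (by omega) hfree
      have hsub : (range l₀).filter P ⊂ S :=
        (ssubset_iff_of_subset (filter_subset_filter P (range_subset_range.mpr hl₀n.le))).mpr
          ⟨l₀, hl₀S, by simp⟩
      have hcard := Nat.mul_le_mul_left m (card_lt_card hsub)
      rw [Nat.mul_succ] at hcard
      omega
    · have := hgap 0 n (Nat.zero_le n) le_rfl fun l _ hln hPl =>
        hP ⟨l, mem_filter.mpr ⟨mem_range.mpr hln, hPl⟩⟩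
      omega

theorem ncard_setOf_lt_and (n : ℕ) (P : ℕ → Prop) [DecidablePred P] :
    {l : ℕ | l < n ∧ P l}.ncard = #((range n).filter P) := by
  rw [← Set.ncard_coe_finset]
  congr
  ext l
  simp

theorem stmt_2_general {Z : Type*} [Fintype Z] (J : Set (Z × Z))
    (hcyc : ∀ (n : ℕ) (c : ℕ → Z), 0 < n → (∀ l < n, c l ≠ c (l + 1)) →
      c 0 = c n → ∃ l < n, (c l, c (l + 1)) ∈ J)
    (n : ℕ) (i : ℕ → Z) (hwalk : ∀ l < n, i l ≠ i (l + 1)) :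
    Set.ncard {l : ℕ | l < n ∧ (i l, i (l + 1)) ∉ J}
      ≤ Fintype.card Z - 1
        + (Fintype.card Z - 1) * Set.ncard {l : ℕ | l < n ∧ (i l, i (l + 1)) ∈ J} ∧
    n ≤ Fintype.card Z - 1
        + Fintype.card Z * Set.ncard {l : ℕ | l < n ∧ (i l, i (l + 1)) ∈ J} := by
  classical
  have hcard : 0 < Fintype.card Z := Fintype.card_pos_iff.mpr ⟨i 0⟩
  have hbound := le_pred_add_mul_card_filter_range (P := fun l => (i l, i (l + 1)) ∈ J) n
    fun a b hab hbn hfree =>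
      HitsEveryCycle.sub_lt_card hcyc hab (fun l _ hlb => hwalk l (by omega)) hfree
  have hsplit := card_filter_add_card_filter_not (s := range n) fun l => (i l, i (l + 1)) ∈ J
  rw [ncard_setOf_lt_and, ncard_setOf_lt_and]
  rw [card_range] at hsplit
  have := Nat.sub_one_mul (Fintype.card Z) #((range n).filter fun l => (i l, i (l + 1)) ∈ J)
  have := Nat.le_mul_of_pos_left #((range n).filter fun l => (i l, i (l + 1)) ∈ J) hcard
  omega

/-- Combinatorial non-explosion lemma: if the transition set `J` hits every
cycle in the finite state space `Z`, then along any walk with distinct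
consecutive states, the total length `n` is bounded by
`|Z| - 1 + |Z| * #{steps lying in J}`. -/
theorem stmt_2 {Z : Type*} [Fintype Z] (J : Set (Z × Z))
    (hJ : ∀ p ∈ J, p.1 ≠ p.2)
    (hcyc : ∀ (n : ℕ) (c : ℕ → Z), 0 < n → (∀ l < n, c l ≠ c (l + 1)) →
      c 0 = c n → ∃ l < n, (c l, c (l + 1)) ∈ J)
    (n : ℕ) (i : ℕ → Z) (hwalk : ∀ l < n, i l ≠ i (l + 1)) :
    Set.ncard {l : ℕ | l < n ∧ (i l, i (l + 1)) ∉ J}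
      ≤ Fintype.card Z - 1
        + (Fintype.card Z - 1) * Set.ncard {l : ℕ | l < n ∧ (i l, i (l + 1)) ∈ J} ∧
    n ≤ Fintype.card Z - 1
        + Fintype.card Z * Set.ncard {l : ℕ | l < n ∧ (i l, i (l + 1)) ∈ J} :=
  stmt_2_general J hcyc n i hwalk
end

section
/- Let Λ : [s, ρ) → [0,∞) be right-continuous, nondecreasing, with Λ(s) = 0 and jumps ΔΛ ≤ 1, with continuous part Λ_c. Define p(t) = exp(-(Λ_c(t) - Λ_c(s))) * ∏_{s<u≤t}(1 - ΔΛ(u)) and q(t) = ∫_{(s,t]} p(u-) dΛ(u). Then q(t) = 1 - p(t) for all t ∈ [s,ρ); in particular 0 ≤ p(t) ≤ 1 and 0 ≤ q(t) ≤ 1. -/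
open MeasureTheory Set Function

open Filter Topology

/-!
Write `P = survival Λ Λc s` and `L = survivalLeft Λ Λc s` for the product integrals of `Λ` over
`(s, t]` and over `(s, t)`, so that `L` is the left limit of `P`. For `s ≤ a < b` put
`D = Λ(b-) - Λ(a)`. Then `L b = P a * G` with `1 - D ≤ G ≤ exp (-D)`, `P b = L b * (1 - ΔΛ(b))`,
and `L` lies between `L b` and `P a` on `(a, b)`. Hence the error
`E t = ∫_(s,t] L dΛ - (1 - P t)` changes by at most `D ^ 2` over `(a, b]`. Cutting `[s, t]`
where `Λ` crosses the levels `Λ s + k ε` makes every `D ≤ ε`, so `|E t| ≤ ε (Λ t - Λ s)` for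
every `ε > 0`, and therefore `E t = 0`.
-/

section UnitIntervalProducts

variable {ι : Type*}

theorem multipliable_of_mem_Icc {f : ι → ℝ} (hf : ∀ i, f i ∈ Icc (0 : ℝ) 1) :
    Multipliable f := by
  classical
  exact ⟨_, tendsto_atTop_ciInf
    (Finset.prod_anti_set_of_le_one (fun i => (hf i).1) (fun i => (hf i).2))
    ⟨0, by rintro _ ⟨F, rfl⟩; exact Finset.prod_nonneg fun i _ => (hf i).1⟩⟩

theorem one_sub_sum_le_prod_one_sub {Δ : ι → ℝ} (hΔ : ∀ i, Δ i ∈ Icc (0 : ℝ) 1)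
    (F : Finset ι) : 1 - ∑ i ∈ F, Δ i ≤ ∏ i ∈ F, (1 - Δ i) := by
  classical
  induction F using Finset.cons_induction with
  | empty => simp
  | cons a F ha ih =>
    rw [Finset.prod_cons, Finset.sum_cons]
    have hS : 0 ≤ ∑ i ∈ F, Δ i := Finset.sum_nonneg fun i _ => (hΔ i).1
    nlinarith [(hΔ a).1, (hΔ a).2]

theorem one_sub_tsum_le_tprod_one_sub {Δ : ι → ℝ} (hΔ : ∀ i, Δ i ∈ Icc (0 : ℝ) 1)
    (hs : Summable Δ) : 1 - ∑' i, Δ i ≤ ∏' i, (1 - Δ i) :=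
  ge_of_tendsto' (multipliable_of_mem_Icc fun i => Icc.mem_iff_one_sub_mem.1 (hΔ i)).hasProd
    fun F => (sub_le_sub_left (hs.sum_le_tsum F fun i _ => (hΔ i).1) 1).trans
      (one_sub_sum_le_prod_one_sub hΔ F)

theorem tprod_one_sub_le_exp_neg_tsum {Δ : ι → ℝ} (hΔ : ∀ i, Δ i ∈ Icc (0 : ℝ) 1)
    (hs : Summable Δ) : ∏' i, (1 - Δ i) ≤ Real.exp (-∑' i, Δ i) := by
  have hexp : Tendsto (fun F : Finset ι => Real.exp (∑ i ∈ F, -Δ i)) atTop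
      (𝓝 (Real.exp (-∑' i, Δ i))) :=
    (Real.continuous_exp.tendsto _).comp hs.hasSum.neg
  refine le_of_tendsto_of_tendsto'
    (multipliable_of_mem_Icc fun i => Icc.mem_iff_one_sub_mem.1 (hΔ i)).hasProd hexp fun F => ?_
  rw [Real.exp_sum]
  exact Finset.prod_le_prod (fun i _ => (Icc.mem_iff_one_sub_mem.1 (hΔ i)).1)
    fun i _ => by linarith [Real.add_one_le_exp (-Δ i)]

theorem one_sub_le_exp_neg_mul_tprod {c : ℝ} (hc : 0 ≤ c) {Δ : ι → ℝ}
    (hΔ : ∀ i, Δ i ∈ Icc (0 : ℝ) 1) (hs : Summable Δ) :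
    1 - (c + ∑' i, Δ i) ≤ Real.exp (-c) * ∏' i, (1 - Δ i) := by
  have hw : 0 ≤ ∏' i, (1 - Δ i) := tprod_nonneg fun i => (Icc.mem_iff_one_sub_mem.1 (hΔ i)).1
  rcases le_or_gt (c + ∑' i, Δ i) 1 with hx | hx
  · have hj : 0 ≤ ∑' i, Δ i := tsum_nonneg fun i => (hΔ i).1
    calc 1 - (c + ∑' i, Δ i) ≤ (1 - c) * (1 - ∑' i, Δ i) := by nlinarith
      _ ≤ Real.exp (-c) * ∏' i, (1 - Δ i) :=
        mul_le_mul (by linarith [Real.add_one_le_exp (-c)])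
          (one_sub_tsum_le_tprod_one_sub hΔ hs) (by linarith) (Real.exp_pos _).le
  · exact (sub_nonpos.2 hx.le).trans (mul_nonneg (Real.exp_pos _).le hw)

theorem exp_neg_mul_tprod_le {c : ℝ} {Δ : ι → ℝ}
    (hΔ : ∀ i, Δ i ∈ Icc (0 : ℝ) 1) (hs : Summable Δ) :
    Real.exp (-c) * ∏' i, (1 - Δ i) ≤ Real.exp (-(c + ∑' i, Δ i)) := by
  rw [neg_add, Real.exp_add]
  exact mul_le_mul_of_nonneg_left (tprod_one_sub_le_exp_neg_tsum hΔ hs) (Real.exp_pos _).le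

end UnitIntervalProducts

theorem Real.exp_neg_le_one_sub_add_sq {x : ℝ} (hx : 0 ≤ x) :
    Real.exp (-x) ≤ 1 - x + x ^ 2 := by
  have h := Real.add_one_le_exp x
  have h1 : Real.exp (-x) * Real.exp x = 1 := by rw [← Real.exp_add]; simp
  nlinarith [Real.exp_pos (-x), Real.exp_pos x]

theorem abs_sub_sub_le_sq {I A L D : ℝ} (hD : 0 ≤ D) (hA : A ∈ Icc (0 : ℝ) 1) (hIl : L * D ≤ I)
    (hIu : I ≤ A * D) (hLl : A * (1 - D) ≤ L) (hLu : L ≤ A * (1 - D + D ^ 2)) :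
    |I - (A - L)| ≤ D ^ 2 := by
  have hAD : A * D ^ 2 ≤ D ^ 2 := mul_le_of_le_one_left (sq_nonneg D) hA.2
  refine abs_le.2 ⟨?_, by nlinarith⟩
  nlinarith [mul_le_mul_of_nonneg_right hLl (by linarith : 0 ≤ 1 + D)]

namespace StieltjesFunction

variable (f : StieltjesFunction ℝ)

noncomputable def jump (x : ℝ) : ℝ := f x - leftLim f x

theorem jump_nonneg (x : ℝ) : 0 ≤ f.jump x :=
  sub_nonneg.2 (f.mono.leftLim_le le_rfl)

theorem jump_eq_measureReal (x : ℝ) : f.jump x = f.measure.real {x} := by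
  rw [measureReal_def, measure_singleton]
  exact (ENNReal.toReal_ofReal (f.jump_nonneg x)).symm

variable {f}

theorem measureReal_Ioo {a b : ℝ} (hab : a < b) :
    f.measure.real (Ioo a b) = leftLim f b - f a := by
  rw [measureReal_def, measure_Ioo, ENNReal.toReal_ofReal (sub_nonneg.2 (f.mono.le_leftLim hab))]

theorem tsum_measure_singleton_le {A : Set ℝ} : ∑' x : A, f.measure {x.1} ≤ f.measure A := by
  conv_rhs => rw [← iUnion_of_singleton_coe A]
  exact tsum_meas_le_meas_iUnion_of_disjoint _ (fun _ => measurableSet_singleton _)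
    fun x y hxy => disjoint_singleton.2 (Subtype.coe_injective.ne hxy)

theorem summable_jump {A : Set ℝ} (hA : f.measure A ≠ ⊤) :
    Summable fun x : A => f.jump x := by
  simp_rw [jump_eq_measureReal, measureReal_def]
  exact ENNReal.summable_toReal (ne_top_of_le_ne_top hA tsum_measure_singleton_le)

theorem tsum_jump_le {A : Set ℝ} (hA : f.measure A ≠ ⊤) :
    ∑' x : A, f.jump x ≤ f.measure.real A := by
  simp_rw [jump_eq_measureReal, measureReal_def]
  rw [← ENNReal.tsum_toReal_eq fun x => by simp [measure_singleton]]
  exact ENNReal.toReal_mono hA tsum_measure_singleton_le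

theorem summable_jump_of_subset_Ioc {A : Set ℝ} {a b : ℝ} (hA : A ⊆ Ioc a b) :
    Summable fun x : A => f.jump x :=
  summable_jump (ne_top_of_le_ne_top (by simp [measure_Ioc]) (measure_mono hA))

theorem tsum_jump_Ioc_le {a b : ℝ} (hab : a ≤ b) : ∑' x : Ioc a b, f.jump x ≤ f b - f a := by
  refine (tsum_jump_le (by simp [measure_Ioc])).trans_eq ?_
  rw [measureReal_def, measure_Ioc, ENNReal.toReal_ofReal (sub_nonneg.2 (f.mono hab))]

theorem setIntegral_Ioc_eq_add_jump_mul {g : ℝ → ℝ} {a b : ℝ} (hab : a < b)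
    (hg : IntegrableOn g (Ioc a b) f.measure) :
    ∫ u in Ioc a b, g u ∂f.measure = ∫ u in Ioo a b, g u ∂f.measure + f.jump b * g b := by
  rw [← Ioo_union_right hab, setIntegral_union (by simp) (measurableSet_singleton b)
    (hg.mono_set Ioo_subset_Ioc_self) (hg.mono_set (by simp [hab])), integral_singleton,
    smul_eq_mul, ← jump_eq_measureReal]

variable (f)

noncomputable def levelTime (s t c : ℝ) : ℝ := sSup {x ∈ Icc s t | f x ≤ c}

variable {f} {s t c : ℝ}

theorem bddAbove_levelSet : BddAbove {x ∈ Icc s t | f x ≤ c} := ⟨t, fun _ hx => hx.1.2⟩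

theorem levelTime_mem_Icc (hst : s ≤ t) (hc : f s ≤ c) : f.levelTime s t c ∈ Icc s t := by
  unfold levelTime
  exact ⟨le_csSup bddAbove_levelSet ⟨⟨le_rfl, hst⟩, hc⟩,
    csSup_le ⟨s, ⟨le_rfl, hst⟩, hc⟩ fun _ hx => hx.1.2⟩

theorem levelTime_mono (hst : s ≤ t) {c' : ℝ} (hc : f s ≤ c) (hcc' : c ≤ c') :
    f.levelTime s t c ≤ f.levelTime s t c' :=
  csSup_le_csSup bddAbove_levelSet ⟨s, ⟨le_rfl, hst⟩, hc⟩ fun _ hx => ⟨hx.1, hx.2.trans hcc'⟩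

theorem levelTime_eq_right (hst : s ≤ t) (htc : f t ≤ c) : f.levelTime s t c = t :=
  le_antisymm (csSup_le ⟨t, ⟨hst, le_rfl⟩, htc⟩ fun _ hx => hx.1.2)
    (le_csSup bddAbove_levelSet ⟨⟨hst, le_rfl⟩, htc⟩)

theorem leftLim_levelTime_le (hst : s ≤ t) (hc : f s ≤ c) :
    leftLim f (f.levelTime s t c) ≤ c := by
  unfold levelTime
  refine le_of_tendsto (f.mono.tendsto_leftLim _) (eventually_nhdsWithin_of_forall fun x hx => ?_)
  have hne : {x ∈ Icc s t | f x ≤ c}.Nonempty := ⟨s, ⟨le_rfl, hst⟩, hc⟩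
  obtain ⟨y, hy, hxy⟩ := exists_lt_of_lt_csSup hne hx
  exact (f.mono hxy.le).trans hy.2

theorem le_apply_levelTime (hst : s ≤ t) (hc : f s ≤ c) (hlt : f.levelTime s t c < t) :
    c ≤ f (f.levelTime s t c) := by
  refine ge_of_tendsto ((f.right_continuous _).mono Ioi_subset_Ici_self) ?_
  filter_upwards [Ioo_mem_nhdsGT hlt] with x hx
  by_contra! hxc
  exact (le_csSup bddAbove_levelSet
    ⟨⟨(levelTime_mem_Icc hst hc).1.trans hx.1.le, hx.2.le⟩, hxc.le⟩).not_gt hx.1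

theorem abs_sub_le_mul_of_leftLim_sub_le {E : ℝ → ℝ} {ε : ℝ}
    (hE : ∀ a b, s ≤ a → a < b → b ≤ t → |E b - E a| ≤ (leftLim f b - f a) ^ 2)
    {a b : ℝ} (hsa : s ≤ a) (hab : a ≤ b) (hbt : b ≤ t) (hD : leftLim f b - f a ≤ ε) :
    |E b - E a| ≤ ε * (f b - f a) := by
  rcases hab.eq_or_lt with rfl | hab
  · simp
  have hD0 : 0 ≤ leftLim f b - f a := sub_nonneg.2 (f.mono.le_leftLim hab)
  calc |E b - E a| ≤ (leftLim f b - f a) ^ 2 := hE a b hsa hab hbt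
    _ ≤ ε * (leftLim f b - f a) := by rw [sq]; exact mul_le_mul_of_nonneg_right hD hD0
    _ ≤ ε * (f b - f a) :=
      mul_le_mul_of_nonneg_left (by linarith [f.mono.leftLim_le (le_refl b)]) (hD0.trans hD)

theorem abs_sub_le_mul_of_abs_sub_le_sq {E : ℝ → ℝ} {ε : ℝ} (hst : s ≤ t) (hε : 0 < ε)
    (hE : ∀ a b, s ≤ a → a < b → b ≤ t → |E b - E a| ≤ (leftLim f b - f a) ^ 2) :
    |E t - E s| ≤ ε * (f t - f s) := by
  let τ : ℕ → ℝ := fun k => f.levelTime s t (f s + k * ε)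
  have hlevel (k : ℕ) : f s ≤ f s + k * ε := le_add_of_nonneg_right (by positivity)
  have hτ k : τ k ∈ Icc s t := levelTime_mem_Icc hst (hlevel k)
  have hτ_succ k : τ k ≤ τ (k + 1) := levelTime_mono hst (hlevel k) (by push_cast; linarith)
  have hleft k : leftLim f (τ k) ≤ f s + k * ε := leftLim_levelTime_le hst (hlevel k)
  have hright k (hk : τ k < t) : f s + k * ε ≤ f (τ k) := le_apply_levelTime hst (hlevel k) hk
  have hclaim : ∀ k, |E (τ k) - E s| ≤ ε * (f (τ k) - f s) := by
    intro k
    induction k with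
    | zero =>
      refine abs_sub_le_mul_of_leftLim_sub_le hE le_rfl (hτ 0).1 (hτ 0).2 ?_
      linarith [show leftLim f (τ 0) ≤ f s by simpa using hleft 0]
    | succ k ih =>
      have hD : leftLim f (τ (k + 1)) - f (τ k) ≤ ε := by
        rcases (hτ k).2.lt_or_eq with hk | hk
        · have := hleft (k + 1)
          push_cast at this
          linarith [hright k hk]
        have hk' : τ (k + 1) = t := (hτ (k + 1)).2.antisymm (hk ▸ hτ_succ k)
        rw [hk', hk]
        linarith [f.mono.leftLim_le (le_refl t)]
      calc |E (τ (k + 1)) - E s| ≤ |E (τ (k + 1)) - E (τ k)| + |E (τ k) - E s| :=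
            abs_sub_le _ _ _
        _ ≤ ε * (f (τ (k + 1)) - f (τ k)) + ε * (f (τ k) - f s) := add_le_add
            (abs_sub_le_mul_of_leftLim_sub_le hE (hτ k).1 (hτ_succ k) (hτ (k + 1)).2 hD) ih
        _ = ε * (f (τ (k + 1)) - f s) := by ring
  obtain ⟨N, hN⟩ := exists_nat_ge ((f t - f s) / ε)
  have hτN : τ N = t := levelTime_eq_right hst (by rw [div_le_iff₀ hε] at hN; linarith)
  simpa [hτN] using hclaim N

theorem eq_of_abs_sub_le_sq {E : ℝ → ℝ} (hst : s ≤ t)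
    (hE : ∀ a b, s ≤ a → a < b → b ≤ t → |E b - E a| ≤ (leftLim f b - f a) ^ 2) :
    E t = E s := by
  have hlim : Tendsto (fun ε => ε * (f t - f s)) (𝓝[>] 0) (𝓝 0) :=
    ((continuous_id.mul continuous_const).tendsto' 0 0 (zero_mul _)).mono_left nhdsWithin_le_nhds
  have hle : |E t - E s| ≤ 0 := ge_of_tendsto hlim
    (eventually_nhdsWithin_of_forall fun ε hε => abs_sub_le_mul_of_abs_sub_le_sq hst hε hE)
  exact sub_eq_zero.1 (abs_nonpos_iff.1 hle)

end StieltjesFunction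

structure IsCumulativeHazardOn (Λ : StieltjesFunction ℝ) (Λc : ℝ → ℝ) (s ρ : ℝ) : Prop where
  jump_le_one : ∀ u ∈ Ioo s ρ, Λ.jump u ≤ 1
  eq_add_tsum_jump : ∀ t ∈ Ico s ρ, Λ t = Λ s + (Λc t - Λc s) + ∑' u : Ioc s t, Λ.jump u

noncomputable def survival (Λ : StieltjesFunction ℝ) (Λc : ℝ → ℝ) (a b : ℝ) : ℝ :=
  Real.exp (-(Λc b - Λc a)) * ∏' u : Ioc a b, (1 - Λ.jump u)

/-- The left limit of `survival Λ Λc a` at `b`. -/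
noncomputable def survivalLeft (Λ : StieltjesFunction ℝ) (Λc : ℝ → ℝ) (a b : ℝ) : ℝ :=
  Real.exp (-(Λc b - Λc a)) * ∏' u : Ioo a b, (1 - Λ.jump u)

theorem survival_self (Λ : StieltjesFunction ℝ) (Λc : ℝ → ℝ) (a : ℝ) :
    survival Λ Λc a a = 1 := by
  simp [survival]

namespace IsCumulativeHazardOn

variable {Λ : StieltjesFunction ℝ} {Λc : ℝ → ℝ} {s ρ a b u : ℝ}

theorem jump_mem_Icc (h : IsCumulativeHazardOn Λ Λc s ρ) (hu : u ∈ Ioo s ρ) :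
    Λ.jump u ∈ Icc (0 : ℝ) 1 :=
  ⟨Λ.jump_nonneg u, h.jump_le_one u hu⟩

theorem one_sub_jump_mem_Icc (h : IsCumulativeHazardOn Λ Λc s ρ) (hu : u ∈ Ioo s ρ) :
    1 - Λ.jump u ∈ Icc (0 : ℝ) 1 :=
  Icc.mem_iff_one_sub_mem.1 (h.jump_mem_Icc hu)

theorem multipliable_one_sub_jump (h : IsCumulativeHazardOn Λ Λc s ρ) {A : Set ℝ}
    (hA : A ⊆ Ioo s ρ) : Multipliable fun u : A => 1 - Λ.jump u :=
  multipliable_of_mem_Icc fun u => h.one_sub_jump_mem_Icc (hA u.2)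

theorem sub_add_tsum_jump_Ioc (h : IsCumulativeHazardOn Λ Λc s ρ) (hsa : s ≤ a) (hab : a ≤ b)
    (hbρ : b < ρ) : Λc b - Λc a + ∑' u : Ioc a b, Λ.jump u = Λ b - Λ a := by
  have hsplit := Summable.tsum_union_disjoint (f := Λ.jump) (s := Ioc s a) (t := Ioc a b)
    (Ioc_disjoint_Ioc_of_le le_rfl)
    (Λ.summable_jump_of_subset_Ioc subset_rfl) (Λ.summable_jump_of_subset_Ioc subset_rfl)
  rw [Ioc_union_Ioc_eq_Ioc hsa hab] at hsplit
  have ha := h.eq_add_tsum_jump a ⟨hsa, hab.trans_lt hbρ⟩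
  have hb := h.eq_add_tsum_jump b ⟨hsa.trans hab, hbρ⟩
  linarith

theorem sub_add_tsum_jump_Ioo (h : IsCumulativeHazardOn Λ Λc s ρ) (hsa : s ≤ a) (hab : a < b)
    (hbρ : b < ρ) : Λc b - Λc a + ∑' u : Ioo a b, Λ.jump u = leftLim Λ b - Λ a := by
  have hsplit := Summable.tsum_union_disjoint (f := Λ.jump) (s := Ioo a b) (t := {b})
    (by simp)
    (Λ.summable_jump_of_subset_Ioc Ioo_subset_Ioc_self) ((Set.finite_singleton b).summable _)
  rw [Ioo_union_right hab, tsum_singleton] at hsplit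
  have := h.sub_add_tsum_jump_Ioc hsa hab.le hbρ
  simp only [StieltjesFunction.jump] at hsplit this ⊢
  linarith

theorem monotoneOn (h : IsCumulativeHazardOn Λ Λc s ρ) : MonotoneOn Λc (Ico s ρ) :=
  fun a ha b hb hab => by
    linarith [h.sub_add_tsum_jump_Ioc ha.1 hab hb.2, Λ.tsum_jump_Ioc_le hab]

theorem survival_mem_Icc (h : IsCumulativeHazardOn Λ Λc s ρ) (hsa : s ≤ a) (hab : a ≤ b)
    (hbρ : b < ρ) : survival Λ Λc a b ∈ Icc (0 : ℝ) 1 := by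
  have hmem (u : Ioc a b) := h.one_sub_jump_mem_Icc ⟨hsa.trans_lt u.2.1, u.2.2.trans_lt hbρ⟩
  refine ⟨mul_nonneg (Real.exp_pos _).le (tprod_nonneg fun u => (hmem u).1), ?_⟩
  refine mul_le_one₀ ?_ (tprod_nonneg fun u => (hmem u).1)
    (tprod_le_of_prod_le' le_rfl fun F => Finset.prod_le_one (fun u _ => (hmem u).1)
      fun u _ => (hmem u).2)
  exact Real.exp_le_one_iff.2 <| neg_nonpos.2 <| sub_nonneg.2 <|
    h.monotoneOn ⟨hsa, hab.trans_lt hbρ⟩ ⟨hsa.trans hab, hbρ⟩ hab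

theorem survivalLeft_nonneg (h : IsCumulativeHazardOn Λ Λc s ρ) (hsa : s ≤ a) (hbρ : b ≤ ρ) :
    0 ≤ survivalLeft Λ Λc a b :=
  mul_nonneg (Real.exp_pos _).le <| tprod_nonneg fun u =>
    (h.one_sub_jump_mem_Icc (Ioo_subset_Ioo hsa hbρ u.2)).1

theorem one_sub_le_survivalLeft (h : IsCumulativeHazardOn Λ Λc s ρ) (hsa : s ≤ a) (hab : a < b)
    (hbρ : b < ρ) : 1 - (leftLim Λ b - Λ a) ≤ survivalLeft Λ Λc a b := by
  have := one_sub_le_exp_neg_mul_tprod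
    (sub_nonneg.2 (h.monotoneOn ⟨hsa, hab.trans hbρ⟩ ⟨hsa.trans hab.le, hbρ⟩ hab.le))
    (fun u => h.jump_mem_Icc (Ioo_subset_Ioo hsa hbρ.le u.2))
    (Λ.summable_jump_of_subset_Ioc Ioo_subset_Ioc_self)
  rwa [h.sub_add_tsum_jump_Ioo hsa hab hbρ] at this

theorem survivalLeft_le_exp (h : IsCumulativeHazardOn Λ Λc s ρ) (hsa : s ≤ a) (hab : a < b)
    (hbρ : b < ρ) : survivalLeft Λ Λc a b ≤ Real.exp (-(leftLim Λ b - Λ a)) := by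
  have := exp_neg_mul_tprod_le (c := Λc b - Λc a)
    (fun u => h.jump_mem_Icc (Ioo_subset_Ioo hsa hbρ.le u.2))
    (Λ.summable_jump_of_subset_Ioc Ioo_subset_Ioc_self)
  rwa [h.sub_add_tsum_jump_Ioo hsa hab hbρ] at this

theorem survivalLeft_le_one (h : IsCumulativeHazardOn Λ Λc s ρ) (hsa : s ≤ a) (hab : a < b)
    (hbρ : b < ρ) : survivalLeft Λ Λc a b ≤ 1 :=
  (h.survivalLeft_le_exp hsa hab hbρ).trans <| Real.exp_le_one_iff.2 <|
    neg_nonpos.2 (sub_nonneg.2 (Λ.mono.le_leftLim hab))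

theorem survival_eq_survivalLeft_mul (h : IsCumulativeHazardOn Λ Λc s ρ) (hsa : s ≤ a)
    (hab : a < b) (hbρ : b < ρ) :
    survival Λ Λc a b = survivalLeft Λ Λc a b * (1 - Λ.jump b) := by
  have hsplit := Multipliable.tprod_union_disjoint (f := fun u => 1 - Λ.jump u)
    (s := Ioo a b) (t := {b}) (by simp)
    (h.multipliable_one_sub_jump (Ioo_subset_Ioo hsa hbρ.le))
    ((Set.finite_singleton b).multipliable _)
  rw [Ioo_union_right hab, tprod_singleton b fun u => 1 - Λ.jump u] at hsplit
  rw [survival, survivalLeft, hsplit, mul_assoc]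

theorem survivalLeft_eq_survival_mul (h : IsCumulativeHazardOn Λ Λc s ρ) (hsa : s ≤ a)
    (hab : a < b) (hbρ : b < ρ) :
    survivalLeft Λ Λc s b = survival Λ Λc s a * survivalLeft Λ Λc a b := by
  have hsplit := Multipliable.tprod_union_disjoint (f := fun u => 1 - Λ.jump u)
    (s := Ioc s a) (t := Ioo a b)
    (disjoint_left.2 fun x hx hx' => lt_irrefl a (hx'.1.trans_le hx.2))
    (h.multipliable_one_sub_jump fun x hx => ⟨hx.1, hx.2.trans_lt (hab.trans hbρ)⟩)
    (h.multipliable_one_sub_jump (Ioo_subset_Ioo hsa hbρ.le))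
  rw [Ioc_union_Ioo_eq_Ioo hsa hab] at hsplit
  rw [survivalLeft, survival, survivalLeft, hsplit,
    show -(Λc b - Λc s) = -(Λc a - Λc s) + -(Λc b - Λc a) by ring, Real.exp_add]
  ring

theorem survivalLeft_le_survival (h : IsCumulativeHazardOn Λ Λc s ρ) (hsa : s ≤ a) (hau : a < u)
    (huρ : u < ρ) : survivalLeft Λ Λc s u ≤ survival Λ Λc s a := by
  rw [h.survivalLeft_eq_survival_mul hsa hau huρ]
  exact mul_le_of_le_one_right (h.survival_mem_Icc le_rfl hsa (hau.trans huρ)).1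
    (h.survivalLeft_le_one hsa hau huρ)

theorem survivalLeft_antitoneOn (h : IsCumulativeHazardOn Λ Λc s ρ) :
    AntitoneOn (survivalLeft Λ Λc s) (Ioo s ρ) := by
  intro u hu v hv huv
  rcases huv.eq_or_lt with rfl | hlt
  · rfl
  calc survivalLeft Λ Λc s v ≤ survival Λ Λc s u := h.survivalLeft_le_survival hu.1.le hlt hv.2
    _ = survivalLeft Λ Λc s u * (1 - Λ.jump u) :=
      h.survival_eq_survivalLeft_mul le_rfl hu.1 hu.2
    _ ≤ survivalLeft Λ Λc s u :=
      mul_le_of_le_one_right (h.survivalLeft_nonneg le_rfl hu.2.le)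
        (sub_le_self _ (Λ.jump_nonneg u))

theorem tendsto_survival_nhdsLT (h : IsCumulativeHazardOn Λ Λc s ρ) (hsu : s < u)
    (huρ : u < ρ) : Tendsto (survival Λ Λc s) (𝓝[<] u) (𝓝 (survivalLeft Λ Λc s u)) := by
  have hgap : Tendsto (fun a => survivalLeft Λ Λc s u + (leftLim Λ u - Λ a)) (𝓝[<] u)
      (𝓝 (survivalLeft Λ Λc s u)) := by
    simpa using (tendsto_const_nhds (x := survivalLeft Λ Λc s u)).add
      ((tendsto_const_nhds (x := leftLim Λ u)).sub (Λ.mono.tendsto_leftLim u))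
  refine tendsto_of_tendsto_of_tendsto_of_le_of_le' tendsto_const_nhds hgap ?_ ?_ <;>
    filter_upwards [Ioo_mem_nhdsLT hsu] with a ha
  · exact h.survivalLeft_le_survival ha.1.le ha.2 huρ
  · -- `survival s a - survivalLeft s u = survival s a * (1 - survivalLeft a u)`
    have hP := h.survival_mem_Icc le_rfl ha.1.le (ha.2.trans huρ)
    have hG := h.one_sub_le_survivalLeft ha.1.le ha.2 huρ
    have hG1 := h.survivalLeft_le_one ha.1.le ha.2 huρ
    rw [h.survivalLeft_eq_survival_mul ha.1.le ha.2 huρ]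
    nlinarith [hP.1, hP.2]

theorem leftLim_eq_survivalLeft (h : IsCumulativeHazardOn Λ Λc s ρ) {p : ℝ → ℝ}
    (hp : ∀ t ∈ Ico s ρ, p t = survival Λ Λc s t) (hu : u ∈ Ioo s ρ) :
    leftLim p u = survivalLeft Λ Λc s u := by
  refine leftLim_eq_of_tendsto ((h.tendsto_survival_nhdsLT hu.1 hu.2).congr' ?_)
  filter_upwards [Ioo_mem_nhdsLT hu.1] with a ha
  exact (hp a ⟨ha.1.le, ha.2.trans hu.2⟩).symm

theorem integrableOn_survivalLeft (h : IsCumulativeHazardOn Λ Λc s ρ) (hbρ : b < ρ) :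
    IntegrableOn (survivalLeft Λ Λc s) (Ioc s b) Λ.measure := by
  have hsub : Ioc s b ⊆ Ioo s ρ := fun x hx => ⟨hx.1, hx.2.trans_lt hbρ⟩
  refine IntegrableOn.of_bound (by simp [StieltjesFunction.measure_Ioc])
    (aemeasurable_restrict_of_antitoneOn measurableSet_Ioc
      (h.survivalLeft_antitoneOn.mono hsub)).aestronglyMeasurable 1
    (ae_restrict_of_forall_mem measurableSet_Ioc fun u hu => ?_)
  rw [Real.norm_of_nonneg (h.survivalLeft_nonneg le_rfl (hsub hu).2.le)]
  exact h.survivalLeft_le_one le_rfl hu.1 (hsub hu).2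

theorem abs_setIntegral_Ioc_sub_le (h : IsCumulativeHazardOn Λ Λc s ρ) (hsa : s ≤ a)
    (hab : a < b) (hbρ : b < ρ) :
    |∫ u in Ioc a b, survivalLeft Λ Λc s u ∂Λ.measure
        - (survival Λ Λc s a - survival Λ Λc s b)| ≤ (leftLim Λ b - Λ a) ^ 2 := by
  set L := survivalLeft Λ Λc s
  set P := survival Λ Λc s
  set D := leftLim Λ b - Λ a
  have hD0 : 0 ≤ D := sub_nonneg.2 (Λ.mono.le_leftLim hab)
  have hPa := h.survival_mem_Icc le_rfl hsa (hab.trans hbρ)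
  have hint : IntegrableOn L (Ioc a b) Λ.measure :=
    (h.integrableOn_survivalLeft hbρ).mono_set (Ioc_subset_Ioc_left hsa)
  have hIoo : IntegrableOn L (Ioo a b) Λ.measure := hint.mono_set Ioo_subset_Ioc_self
  have hfin : Λ.measure (Ioo a b) ≠ ⊤ := by simp [StieltjesFunction.measure_Ioo]
  have hμD : Λ.measure.real (Ioo a b) = D := Λ.measureReal_Ioo hab
  have hIu : ∫ u in Ioo a b, L u ∂Λ.measure ≤ P a * D := by
    calc ∫ u in Ioo a b, L u ∂Λ.measure ≤ ∫ _ in Ioo a b, P a ∂Λ.measure :=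
          setIntegral_mono_on hIoo (integrableOn_const hfin) measurableSet_Ioo
            fun u hu => h.survivalLeft_le_survival hsa hu.1 (hu.2.trans hbρ)
      _ = P a * D := by
          rw [setIntegral_const, smul_eq_mul, hμD, mul_comm]
  have hIl : L b * D ≤ ∫ u in Ioo a b, L u ∂Λ.measure := by
    rw [← hμD]
    exact setIntegral_ge_of_const_le_real measurableSet_Ioo hfin (fun u hu =>
      h.survivalLeft_antitoneOn ⟨hsa.trans_lt hu.1, hu.2.trans hbρ⟩ ⟨hsa.trans_lt hab, hbρ⟩
        hu.2.le) hIoo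
  have hLb : L b = P a * survivalLeft Λ Λc a b := h.survivalLeft_eq_survival_mul hsa hab hbρ
  have hLl : P a * (1 - D) ≤ L b :=
    hLb ▸ mul_le_mul_of_nonneg_left (h.one_sub_le_survivalLeft hsa hab hbρ) hPa.1
  have hLu : L b ≤ P a * (1 - D + D ^ 2) :=
    hLb ▸ mul_le_mul_of_nonneg_left ((h.survivalLeft_le_exp hsa hab hbρ).trans
      (Real.exp_neg_le_one_sub_add_sq hD0)) hPa.1
  have hPb : P b = L b * (1 - Λ.jump b) :=
    h.survival_eq_survivalLeft_mul le_rfl (hsa.trans_lt hab) hbρ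
  rw [Λ.setIntegral_Ioc_eq_add_jump_mul hab hint, hPb]
  convert abs_sub_sub_le_sq hD0 hPa hIl hIu hLl hLu using 2
  ring

theorem setIntegral_survivalLeft {t : ℝ} (h : IsCumulativeHazardOn Λ Λc s ρ) (ht : t ∈ Ico s ρ) :
    ∫ u in Ioc s t, survivalLeft Λ Λc s u ∂Λ.measure = 1 - survival Λ Λc s t := by
  let E x := ∫ u in Ioc s x, survivalLeft Λ Λc s u ∂Λ.measure - (1 - survival Λ Λc s x)
  have hE : E t = E s := Λ.eq_of_abs_sub_le_sq ht.1 fun a b hsa hab hbt => by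
    have hint := h.integrableOn_survivalLeft (hbt.trans_lt ht.2)
    have hsplit : ∫ u in Ioc s b, survivalLeft Λ Λc s u ∂Λ.measure =
        ∫ u in Ioc s a, survivalLeft Λ Λc s u ∂Λ.measure +
          ∫ u in Ioc a b, survivalLeft Λ Λc s u ∂Λ.measure := by
      rw [← Ioc_union_Ioc_eq_Ioc hsa hab.le]
      exact setIntegral_union (Ioc_disjoint_Ioc_of_le le_rfl) measurableSet_Ioc
        (hint.mono_set (Ioc_subset_Ioc_right hab.le)) (hint.mono_set (Ioc_subset_Ioc_left hsa))
    have hEab : E b - E a = ∫ u in Ioc a b, survivalLeft Λ Λc s u ∂Λ.measure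
        - (survival Λ Λc s a - survival Λ Λc s b) := by
      simp only [E, hsplit]
      ring
    rw [hEab]
    exact h.abs_setIntegral_Ioc_sub_le hsa hab (hbt.trans_lt ht.2)
  simpa [E, survival_self, sub_eq_zero] using hE

end IsCumulativeHazardOn

theorem stmt_4_general (s ρ : ℝ) (Λ : StieltjesFunction ℝ)
    (hjump : ∀ u ∈ Set.Ioo s ρ, (Λ : ℝ → ℝ) u - leftLim (Λ : ℝ → ℝ) u ≤ 1)
    (Λc : ℝ → ℝ)
    (hΛc_decomp : ∀ t ∈ Set.Ico s ρ,
      (Λ : ℝ → ℝ) t = Λ s + (Λc t - Λc s)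
        + ∑' u : (Set.Ioc s t), ((Λ : ℝ → ℝ) u.1 - leftLim (Λ : ℝ → ℝ) u.1))
    (p q : ℝ → ℝ)
    (hp : ∀ t ∈ Set.Ico s ρ,
      p t = Real.exp (-(Λc t - Λc s))
        * ∏' u : (Set.Ioc s t), (1 - ((Λ : ℝ → ℝ) u.1 - leftLim (Λ : ℝ → ℝ) u.1)))
    (hq : ∀ t ∈ Set.Ico s ρ,
      q t = ∫ u in Set.Ioc s t, leftLim p u ∂Λ.measure) :
    ∀ t ∈ Set.Ico s ρ,
      q t = 1 - p t ∧ p t ∈ Set.Icc (0 : ℝ) 1 ∧ q t ∈ Set.Icc (0 : ℝ) 1 := by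
  intro t ht
  have h : IsCumulativeHazardOn Λ Λc s ρ := ⟨hjump, hΛc_decomp⟩
  have hpt : p t = survival Λ Λc s t := hp t ht
  have hqp : q t = 1 - p t := by
    rw [hq t ht, hpt, ← h.setIntegral_survivalLeft ht]
    exact setIntegral_congr_fun measurableSet_Ioc fun u hu =>
      h.leftLim_eq_survivalLeft hp ⟨hu.1, hu.2.trans_lt ht.2⟩
  have hp01 : p t ∈ Icc (0 : ℝ) 1 := hpt ▸ h.survival_mem_Icc le_rfl ht.1 ht.2
  exact ⟨hqp, hp01, hqp ▸ Icc.mem_iff_one_sub_mem.1 hp01⟩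

/-- Relation between the survival function `p` of the first jump time and its
distribution function `q`: with `p` the product-integral of the cumulative
hazard `Λ` and `q t = ∫_(s,t] p(u-) dΛ(u)`, one has `q = 1 - p` on `[s,ρ)`,
and in particular `0 ≤ p ≤ 1` and `0 ≤ q ≤ 1` there. -/
theorem stmt_4 (s ρ : ℝ) (hsρ : s < ρ) (Λ : StieltjesFunction ℝ) (hΛs : Λ s = 0)
    (hjump : ∀ u ∈ Set.Ioo s ρ, (Λ : ℝ → ℝ) u - leftLim (Λ : ℝ → ℝ) u ≤ 1)
    (Λc : ℝ → ℝ) (hΛc_cont : ContinuousOn Λc (Set.Ico s ρ))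
    (hΛc_decomp : ∀ t ∈ Set.Ico s ρ,
      (Λ : ℝ → ℝ) t = Λ s + (Λc t - Λc s)
        + ∑' u : (Set.Ioc s t), ((Λ : ℝ → ℝ) u.1 - leftLim (Λ : ℝ → ℝ) u.1))
    (p q : ℝ → ℝ)
    (hp : ∀ t ∈ Set.Ico s ρ,
      p t = Real.exp (-(Λc t - Λc s))
        * ∏' u : (Set.Ioc s t), (1 - ((Λ : ℝ → ℝ) u.1 - leftLim (Λ : ℝ → ℝ) u.1)))
    (hq : ∀ t ∈ Set.Ico s ρ,
      q t = ∫ u in Set.Ioc s t, leftLim p u ∂Λ.measure) :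
    ∀ t ∈ Set.Ico s ρ,
      q t = 1 - p t ∧ p t ∈ Set.Icc (0 : ℝ) 1 ∧ q t ∈ Set.Icc (0 : ℝ) 1 :=
  stmt_4_general s ρ Λ hjump Λc hΛc_decomp p q hp hq
end

section
/- In the canonical filtration setting, for each t ∈ [0,∞) and n ∈ ℕ₀, the trace σ-algebras satisfy 𝒢_n ∩ {τ_n ≤ t < τ_{n+1}} = ℱ_t ∩ {τ_n ≤ t < τ_{n+1}}, where 𝒢_n = σ((τ_k, ζ_k) : k ≤ n) and ℱ_t = σ(1_{τ_k ≤ t}(τ_k, ζ_k) : k ∈ ℕ₀). -/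
open scoped ENNReal
open Classical MeasurableSpace

/-- Measurable structure on an `Option` type: a set is measurable iff its
preimage under `some` is measurable (the cemetery point `none` is measurable). -/
instance optionMeasurableSpace {α : Type*} [MeasurableSpace α] :
    MeasurableSpace (Option α) :=
  MeasurableSpace.map some ‹MeasurableSpace α›

/-- The canonical space of marked point process trajectories with marks in `S`
(the cemetery mark `∇` is encoded by `none`). -/
def IsCanonPath {S : Type*} (t : ℕ → ℝ≥0∞) (z : ℕ → Option S) : Prop :=
  t 0 = 0 ∧ (∀ k, t k < ⊤ → t k < t (k + 1)) ∧ (∀ k, t k = ⊤ → t (k + 1) = ⊤) ∧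
    (∀ k, t k < ⊤ → (z k).isSome) ∧ (∀ k, t k = ⊤ → z k = none) ∧
    (∀ k, t (k + 1) < ⊤ → z k ≠ z (k + 1)) ∧ (⨆ k, t k) = ⊤

/-- The canonical trajectory space `Ω`. -/
def Traj (S : Type*) : Type _ :=
  {ω : (ℕ → ℝ≥0∞) × (ℕ → Option S) // IsCanonPath ω.1 ω.2}

/-- The `k`-th jump time. -/
def jumpTime {S : Type*} (k : ℕ) (ω : Traj S) : ℝ≥0∞ := ω.1.1 k

/-- The `k`-th mark. -/
def mark {S : Type*} (k : ℕ) (ω : Traj S) : Option S := ω.1.2 k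

/-- The σ-algebra `𝒢 n = σ((τ_k, ζ_k) : k ≤ n)` generated by the first `n + 1`
points of the marked point process. -/
def sigmaG (S : Type*) [MeasurableSpace S] (n : ℕ) : MeasurableSpace (Traj S) :=
  ⨆ k, ⨆ (_ : k ≤ n),
    MeasurableSpace.comap (fun ω => (jumpTime k ω, mark k ω)) inferInstance

/-- The canonical filtration `ℱ_t = σ(1_{τ_k ≤ t}(τ_k, ζ_k) : k ∈ ℕ₀)`,
generated by the jump points killed after time `t`. -/
noncomputable def sigmaF (S : Type*) [MeasurableSpace S] (t : ℝ≥0∞) : MeasurableSpace (Traj S) :=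
  ⨆ k, MeasurableSpace.comap
    (fun ω => if jumpTime k ω ≤ t then some (jumpTime k ω, mark k ω) else none)
    inferInstance

/-! On `B = {τ_n ≤ t < τ_{n+1}}` the killed point `1_{τ_k ≤ t}(τ_k, ζ_k)` is `some (τ_k, ζ_k)` for
`k ≤ n` and the cemetery `none` for `k > n`, because the jump times are nondecreasing. Hence the
generators of `ℱ_t` and of `𝒢_n` induce the same σ-algebra on the subtype `B`, and two σ-algebras
whose induced σ-algebras on `B` agree have the same trace on `B`. -/

section TraceIdentity

open MeasureTheory

variable {S : Type*}

lemma comap_some_optionMeasurableSpace {α : Type*} [m : MeasurableSpace α] :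
    (optionMeasurableSpace : MeasurableSpace (Option α)).comap some = m := by
  refine le_antisymm MeasurableSpace.comap_map_le fun s hs => ⟨some '' s, ?_, ?_⟩
  · show MeasurableSet (some ⁻¹' (some '' s))
    rwa [Set.preimage_image_eq _ (Option.some_injective α)]
  · exact Set.preimage_image_eq _ (Option.some_injective α)

lemma exists_inter_eq_of_comap_val_le {α : Type*} {m₁ m₂ : MeasurableSpace α} {B : Set α}
    (h : m₁.comap ((↑) : B → α) ≤ m₂.comap (↑)) {A : Set α} (hA : MeasurableSet[m₁] A) :
    ∃ A', MeasurableSet[m₂] A' ∧ A ∩ B = A' ∩ B := by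
  obtain ⟨A', hA', hpre⟩ := h _ ⟨A, hA, rfl⟩
  refine ⟨A', hA', ?_⟩
  rwa [Set.inter_comm, Set.inter_comm A', ← Subtype.preimage_coe_eq_preimage_coe_iff, eq_comm]

lemma exists_inter_eq_iff_of_comap_val_eq {α : Type*} {m₁ m₂ : MeasurableSpace α} {B : Set α}
    (h : m₁.comap ((↑) : B → α) = m₂.comap (↑)) (C : Set α) :
    (∃ A, MeasurableSet[m₁] A ∧ C = A ∩ B) ↔ (∃ A, MeasurableSet[m₂] A ∧ C = A ∩ B) := by
  constructor <;> rintro ⟨A, hA, rfl⟩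
  · exact exists_inter_eq_of_comap_val_le h.le hA
  · exact exists_inter_eq_of_comap_val_le h.ge hA

lemma monotone_jumpTime (ω : Traj S) : Monotone (jumpTime · ω) := by
  obtain ⟨-, hlt, htop, -⟩ := ω.2
  refine monotone_nat_of_le_succ fun k => ?_
  by_cases hk : jumpTime k ω = ⊤
  · exact le_top.trans_eq (htop k hk).symm
  · exact (hlt k (lt_top_iff_ne_top.mpr hk)).le

def markedPoint (k : ℕ) (ω : Traj S) : ℝ≥0∞ × Option S := (jumpTime k ω, mark k ω)

noncomputable def killedPoint (t : ℝ≥0∞) (k : ℕ) (ω : Traj S) : Option (ℝ≥0∞ × Option S) :=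
  if jumpTime k ω ≤ t then some (markedPoint k ω) else none

lemma killedPoint_of_le {t : ℝ≥0∞} {k n : ℕ} {ω : Traj S} (hk : k ≤ n) (hω : jumpTime n ω ≤ t) :
    killedPoint t k ω = some (markedPoint k ω) :=
  if_pos ((monotone_jumpTime ω hk).trans hω)

lemma killedPoint_of_lt {t : ℝ≥0∞} {k n : ℕ} {ω : Traj S} (hk : n < k)
    (hω : t < jumpTime (n + 1) ω) : killedPoint t k ω = none :=
  if_neg (hω.trans_le (monotone_jumpTime ω hk)).not_ge

variable [MeasurableSpace S]

lemma sigmaG_eq (n : ℕ) :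
    sigmaG S n = ⨆ k, ⨆ (_ : k ≤ n), MeasurableSpace.comap (markedPoint k) inferInstance := rfl

lemma sigmaF_eq (t : ℝ≥0∞) :
    sigmaF S t = ⨆ k, MeasurableSpace.comap (killedPoint t k) inferInstance := rfl

lemma comap_val_sigmaF_eq (t : ℝ≥0∞) (n : ℕ) :
    (sigmaF S t).comap ((↑) : {ω : Traj S | jumpTime n ω ≤ t ∧ t < jumpTime (n + 1) ω} → Traj S)
      = (sigmaG S n).comap (↑) := by
  set B := {ω : Traj S | jumpTime n ω ≤ t ∧ t < jumpTime (n + 1) ω}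
  have h_le : ∀ k ≤ n, MeasurableSpace.comap (killedPoint t k ∘ ((↑) : B → Traj S)) inferInstance
      = MeasurableSpace.comap (markedPoint k ∘ ((↑) : B → Traj S)) inferInstance := by
    intro k hk
    have : killedPoint t k ∘ ((↑) : B → Traj S) = some ∘ markedPoint k ∘ (↑) :=
      funext fun ω => killedPoint_of_le hk ω.2.1
    rw [this, ← MeasurableSpace.comap_comp, comap_some_optionMeasurableSpace]
  have h_lt : ∀ k, n < k → killedPoint t k ∘ ((↑) : B → Traj S) = fun _ => none :=
    fun k hk => funext fun ω => killedPoint_of_lt hk ω.2.2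
  rw [sigmaF_eq, sigmaG_eq]
  simp only [MeasurableSpace.comap_iSup, MeasurableSpace.comap_comp]
  refine le_antisymm (iSup_le fun k => ?_) (iSup₂_le fun k hk => ?_)
  · rcases le_or_gt k n with hk | hk
    · exact (h_le k hk).trans_le (le_iSup₂_of_le k hk le_rfl)
    · rw [h_lt k hk, MeasurableSpace.comap_const]
      exact bot_le
  · exact (h_le k hk).symm.trans_le (le_iSup_of_le k le_rfl)

end TraceIdentity

theorem stmt_11_general {S : Type*} [MeasurableSpace S]
    (t : ℝ≥0∞) (n : ℕ) :
    ∀ C : Set (Traj S),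
      (∃ A, @MeasurableSet (Traj S) (sigmaG S n) A ∧
          C = A ∩ {ω | jumpTime n ω ≤ t ∧ t < jumpTime (n + 1) ω})
      ↔ (∃ A, @MeasurableSet (Traj S) (sigmaF S t) A ∧
          C = A ∩ {ω | jumpTime n ω ≤ t ∧ t < jumpTime (n + 1) ω}) :=
  fun C => (exists_inter_eq_iff_of_comap_val_eq (comap_val_sigmaF_eq t n) C).symm

/-- Trace identity: `𝒢_n ∩ {τ_n ≤ t < τ_{n+1}} = ℱ_t ∩ {τ_n ≤ t < τ_{n+1}}`. -/
theorem stmt_11 {S : Type*} [Fintype S] [MeasurableSpace S]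
    (t : ℝ≥0∞) (ht : t ≠ ⊤) (n : ℕ) :
    ∀ C : Set (Traj S),
      (∃ A, @MeasurableSet (Traj S) (sigmaG S n) A ∧
          C = A ∩ {ω | jumpTime n ω ≤ t ∧ t < jumpTime (n + 1) ω})
      ↔ (∃ A, @MeasurableSet (Traj S) (sigmaF S t) A ∧
          C = A ∩ {ω | jumpTime n ω ≤ t ∧ t < jumpTime (n + 1) ω}) :=
  stmt_11_general t n
end
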